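/- For a weak composition a of length n, there is a unique lock Kohnert tableau T_a of content a whose weight equals flat(a), the composition obtained from a by removing zero parts and left-justifying to the bottom rows. -/

import Mathlib

/-!
Let `flatRow a j` be the number of nonzero parts among `a_1, …, a_j`, the row of `flat(a)` that
receives part `j`. In column `max(a)` of a lock Kohnert tableau every label `j` with `a_j ≠ 0`
occurs exactly once, and rows increase with labels there, so the cell labelled `j` in that column
lies in row at least `flatRow a j`; by weak descent so does every cell labelled `j`. If the weight
is `flat(a)`, the rows of all cells add up to `∑ j, flatRow a j * a_j`, which is also the sum of
these lower bounds, so every cell labelled `j` lies in row exactly `flatRow a j`. Together with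
the prescribed columns of each label this determines the tableau.
-/

open scoped Classical

/-- A Kohnert move: take the rightmost cell of row `r` and move it down in its
column to the highest open row `r'` below (rows indexed from 1). Cells are `(row, column)`. -/
def KohnertMove (D D' : Finset (ℕ × ℕ)) : Prop :=
  ∃ r c r', (r, c) ∈ D ∧ (∀ c', (r, c') ∈ D → c' ≤ c) ∧
    1 ≤ r' ∧ r' < r ∧ (r', c) ∉ D ∧ (∀ r'', r' < r'' → r'' < r → (r'', c) ∈ D) ∧
    D' = insert (r', c) (D.erase (r, c))

/-- The largest part of a weak composition. -/
def maxPart (a : List ℕ) : ℕ := a.foldr max 0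

/-- Number of cells of a diagram in row `i`. -/
def rowWeight (D : Finset (ℕ × ℕ)) (i : ℕ) : ℕ :=
  (D.filter (fun p => p.1 = i)).card

/-- The weight of a diagram, as a finitely supported function recording the
number of cells in each row. -/
noncomputable def wtF (D : Finset (ℕ × ℕ)) : ℕ →₀ ℕ := ∑ p ∈ D, Finsupp.single p.1 1

/-- The exponent vector `x^a` of a weak composition `a` (1-based variables). -/
noncomputable def compFinsupp (a : List ℕ) : ℕ →₀ ℕ :=
  ∑ i ∈ Finset.range a.length, Finsupp.single (i + 1) (a.getD i 0)

/-- A labeled diagram is a finite set of triples `(row, column, label)`. The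
underlying diagram forgets the labels. -/
def Tcells (T : Finset (ℕ × ℕ × ℕ)) : Finset (ℕ × ℕ) := T.image (fun t => (t.1, t.2.1))

/-- The weight of a labeled diagram records the number of cells in each row. -/
noncomputable def wtT (T : Finset (ℕ × ℕ × ℕ)) : ℕ →₀ ℕ := ∑ t ∈ T, Finsupp.single t.1 1

/-- Lock Kohnert tableau of content `a`: one label per cell; exactly one `i` in
each column from `max(a) - a_i + 1` through `max(a)`; entries in row `r` are at
least `r` (and labels lie in `1..n`); cells with a fixed label weakly descend
from left to right; labels strictly decrease down columns. -/
def IsLKTF (a : List ℕ) (T : Finset (ℕ × ℕ × ℕ)) : Prop :=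
  (∀ t ∈ T, ∀ t' ∈ T, t.1 = t'.1 → t.2.1 = t'.2.1 → t = t') ∧
  (∀ i ∈ Finset.Icc 1 a.length, ∀ c : ℕ,
      (T.filter (fun t => t.2.1 = c ∧ t.2.2 = i)).card =
        if maxPart a - a.getD (i - 1) 0 < c ∧ c ≤ maxPart a then 1 else 0) ∧
  (∀ t ∈ T, 1 ≤ t.1 ∧ t.1 ≤ t.2.2 ∧ 1 ≤ t.2.2 ∧ t.2.2 ≤ a.length) ∧
  (∀ t ∈ T, ∀ t' ∈ T, t.2.2 = t'.2.2 → t.2.1 < t'.2.1 → t'.1 ≤ t.1) ∧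
  (∀ t ∈ T, ∀ t' ∈ T, t.2.1 = t'.2.1 → t.1 < t'.1 → t.2.2 < t'.2.2)

/-- `flat(a)`: the nonzero parts of `a`, in order. -/
def flatC (a : List ℕ) : List ℕ := a.filter (fun x => x ≠ 0)


open Finset

def flatRow (a : List ℕ) (j : ℕ) : ℕ := #{p ∈ Icc 1 j | a.getD (p - 1) 0 ≠ 0}

lemma flatRow_succ (a : List ℕ) (j : ℕ) :
    flatRow a (j + 1) = flatRow a j + if a.getD j 0 = 0 then 0 else 1 := by
  simp only [flatRow, card_filter, sum_Icc_succ_top (Nat.le_add_left 1 j), Nat.add_sub_cancel]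
  split_ifs <;> simp_all

lemma flatRow_mono (a : List ℕ) : Monotone (flatRow a) :=
  monotone_nat_of_le_succ fun j => by rw [flatRow_succ]; omega

lemma flatRow_le (a : List ℕ) (j : ℕ) : flatRow a j ≤ j :=
  (card_filter_le _ _).trans (by simp)

lemma flatRow_sub_one_lt {a : List ℕ} {j : ℕ} (hj : 1 ≤ j) (ha : a.getD (j - 1) 0 ≠ 0) :
    flatRow a (j - 1) < flatRow a j := by
  obtain ⟨i, rfl⟩ := Nat.exists_eq_add_of_le' hj
  rw [Nat.add_sub_cancel] at ha ⊢
  rw [flatRow_succ, if_neg ha]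
  omega

lemma one_le_flatRow {a : List ℕ} {j : ℕ} (hj : 1 ≤ j) (ha : a.getD (j - 1) 0 ≠ 0) :
    1 ≤ flatRow a j :=
  (Nat.zero_le _).trans_lt (flatRow_sub_one_lt hj ha)

lemma flatRow_lt_flatRow {a : List ℕ} {i j : ℕ} (hij : i < j) (ha : a.getD (j - 1) 0 ≠ 0) :
    flatRow a i < flatRow a j :=
  (flatRow_mono a (Nat.le_sub_one_of_lt hij)).trans_lt (flatRow_sub_one_lt (by omega) ha)

lemma flatC_take_succ (a : List ℕ) (j : ℕ) :
    flatC (a.take (j + 1)) = flatC (a.take j) ++ if a.getD j 0 = 0 then [] else [a.getD j 0] := by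
  rw [List.take_add_one, flatC, List.filter_append]
  congr 1
  cases h : a[j]? <;> simp [List.getD_eq_getElem?_getD, h, List.filter_singleton]

lemma length_flatC_take (a : List ℕ) (j : ℕ) : (flatC (a.take j)).length = flatRow a j := by
  induction j with
  | zero => simp [flatC, flatRow]
  | succ j ih => rw [flatC_take_succ, List.length_append, ih, flatRow_succ]; split_ifs <;> rfl

lemma compFinsupp_append_singleton (l : List ℕ) (x : ℕ) :
    compFinsupp (l ++ [x]) = compFinsupp l + Finsupp.single (l.length + 1) x := by
  rw [compFinsupp, List.length_append, List.length_singleton, sum_range_succ, compFinsupp]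
  congr 1
  · exact sum_congr rfl fun i hi => by rw [List.getD_append _ _ _ _ (mem_range.mp hi)]
  · simp

lemma compFinsupp_flatC_take (a : List ℕ) (j : ℕ) :
    compFinsupp (flatC (a.take j)) =
      ∑ i ∈ Icc 1 j, Finsupp.single (flatRow a i) (a.getD (i - 1) 0) := by
  induction j with
  | zero => simp [flatC, compFinsupp]
  | succ j ih =>
    rw [sum_Icc_succ_top (Nat.le_add_left 1 j), ← ih, flatC_take_succ, flatRow_succ,
      Nat.add_sub_cancel]
    split_ifs with h
    · rw [h]; simp
    · rw [compFinsupp_append_singleton, length_flatC_take]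

lemma compFinsupp_flatC (a : List ℕ) :
    compFinsupp (flatC a) =
      ∑ i ∈ Icc 1 a.length, Finsupp.single (flatRow a i) (a.getD (i - 1) 0) := by
  rw [← compFinsupp_flatC_take, List.take_length]

lemma getD_le_maxPart (a : List ℕ) (i : ℕ) : a.getD i 0 ≤ maxPart a := by
  induction a generalizing i with
  | nil => simp
  | cons x l ih =>
    cases i with
    | zero => exact le_max_left x (maxPart l)
    | succ i => exact (ih i).trans (le_max_right x (maxPart l))

namespace IsLKTF

variable {a : List ℕ} {T : Finset (ℕ × ℕ × ℕ)} {t t' : ℕ × ℕ × ℕ}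

lemma label_mem_Icc (hT : IsLKTF a T) (ht : t ∈ T) : t.2.2 ∈ Icc 1 a.length :=
  mem_Icc.mpr ⟨(hT.2.2.1 t ht).2.2.1, (hT.2.2.1 t ht).2.2.2⟩

lemma column_bounds (hT : IsLKTF a T) (ht : t ∈ T) :
    maxPart a - a.getD (t.2.2 - 1) 0 < t.2.1 ∧ t.2.1 ≤ maxPart a := by
  have hpos : 0 < #{u ∈ T | u.2.1 = t.2.1 ∧ u.2.2 = t.2.2} := card_pos.mpr ⟨t, by simp [ht]⟩
  rw [hT.2.1 _ (hT.label_mem_Icc ht)] at hpos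
  split_ifs at hpos with h
  · exact h
  · omega

lemma getD_label_ne_zero (hT : IsLKTF a T) (ht : t ∈ T) : a.getD (t.2.2 - 1) 0 ≠ 0 := by
  have := hT.column_bounds ht
  omega

lemma exists_mem_of_column_bounds {i c : ℕ} (hT : IsLKTF a T) (hi : i ∈ Icc 1 a.length)
    (hc : maxPart a - a.getD (i - 1) 0 < c ∧ c ≤ maxPart a) : ∃ t ∈ T, t.2.1 = c ∧ t.2.2 = i := by
  have hpos := hT.2.1 i hi c
  rw [if_pos hc] at hpos
  exact filter_nonempty_iff.mp (card_pos.mp (by omega))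

lemma eq_of_column_eq_of_label_eq (hT : IsLKTF a T) (ht : t ∈ T) (ht' : t' ∈ T)
    (hc : t.2.1 = t'.2.1) (hl : t.2.2 = t'.2.2) : t = t' := by
  have hle : #{u ∈ T | u.2.1 = t.2.1 ∧ u.2.2 = t.2.2} ≤ 1 := by
    rw [hT.2.1 _ (hT.label_mem_Icc ht)]
    split_ifs <;> omega
  exact card_le_one.mp hle t (by simp [ht]) t' (by simp [ht', hc, hl])

lemma card_filter_label {i : ℕ} (hT : IsLKTF a T) (hi : i ∈ Icc 1 a.length) :
    #{t ∈ T | t.2.2 = i} = a.getD (i - 1) 0 := by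
  have hmaps : Set.MapsTo (fun t : ℕ × ℕ × ℕ => t.2.1) ↑({t ∈ T | t.2.2 = i})
      ↑(Ioc (maxPart a - a.getD (i - 1) 0) (maxPart a)) := by
    intro t ht
    obtain ⟨htT, rfl⟩ := mem_filter.mp ht
    exact mem_Ioc.mpr (hT.column_bounds htT)
  have hfiber : ∀ c ∈ Ioc (maxPart a - a.getD (i - 1) 0) (maxPart a),
      #{t ∈ {t ∈ T | t.2.2 = i} | t.2.1 = c} = 1 := by
    intro c hc
    rw [filter_filter, filter_congr fun _ _ => and_comm, hT.2.1 i hi c, if_pos (mem_Ioc.mp hc)]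
  rw [card_eq_sum_card_fiberwise hmaps, sum_const_nat hfiber, Nat.card_Ioc]
  have := getD_le_maxPart a (i - 1)
  omega

lemma sum_label {M : Type*} [AddCommMonoid M] (hT : IsLKTF a T) (g : ℕ → M) :
    ∑ t ∈ T, g t.2.2 = ∑ i ∈ Icc 1 a.length, a.getD (i - 1) 0 • g i := by
  rw [← sum_fiberwise_of_maps_to (fun t ht => hT.label_mem_Icc ht)]
  refine sum_congr rfl fun i hi => ?_
  rw [sum_congr rfl fun t ht => by rw [(mem_filter.mp ht).2], sum_const, hT.card_filter_label hi]

lemma row_lt_row_of_label_lt (hT : IsLKTF a T) (ht : t ∈ T) (ht' : t' ∈ T)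
    (hc : t.2.1 = t'.2.1) (hl : t.2.2 < t'.2.2) : t.1 < t'.1 := by
  rcases lt_trichotomy t.1 t'.1 with h | h | h
  · exact h
  · rw [hT.1 t ht t' ht' h hc] at hl
    exact absurd hl (lt_irrefl _)
  · exact absurd (hT.2.2.2.2 t' ht' t ht hc.symm h) hl.not_gt

end IsLKTF

def flatTableau (a : List ℕ) : Finset (ℕ × ℕ × ℕ) :=
  {p ∈ Icc 1 a.length ×ˢ Icc 1 (maxPart a) | maxPart a - a.getD (p.1 - 1) 0 < p.2}.image
    fun p => (flatRow a p.1, p.2, p.1)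

lemma mem_flatTableau {a : List ℕ} {t : ℕ × ℕ × ℕ} :
    t ∈ flatTableau a ↔ t.2.2 ∈ Icc 1 a.length ∧
      (maxPart a - a.getD (t.2.2 - 1) 0 < t.2.1 ∧ t.2.1 ≤ maxPart a) ∧ t.1 = flatRow a t.2.2 := by
  obtain ⟨r, c, i⟩ := t
  simp only [flatTableau, mem_image, mem_filter, mem_product, mem_Icc, Prod.exists, Prod.mk.injEq]
  constructor
  · rintro ⟨i, c, ⟨⟨hi, hc⟩, hlt⟩, rfl, rfl, rfl⟩
    exact ⟨hi, ⟨hlt, hc.2⟩, rfl⟩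
  · rintro ⟨hi, ⟨hlt, hc⟩, rfl⟩
    exact ⟨i, c, ⟨⟨hi, by omega, hc⟩, hlt⟩, rfl, rfl, rfl⟩

lemma isLKTF_flatTableau (a : List ℕ) : IsLKTF a (flatTableau a) := by
  have hne {t} (ht : t ∈ flatTableau a) : a.getD (t.2.2 - 1) 0 ≠ 0 := by
    have := mem_flatTableau.mp ht
    omega
  refine ⟨fun t ht t' ht' hr hc => ?_, fun i hi c => ?_, fun t ht => ?_, fun t ht t' ht' hl _ => ?_,
    fun t ht t' ht' _ hr => ?_⟩
  · obtain ⟨-, -, htr⟩ := mem_flatTableau.mp ht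
    obtain ⟨-, -, htr'⟩ := mem_flatTableau.mp ht'
    have hl : t.2.2 = t'.2.2 := by
      rcases lt_trichotomy t.2.2 t'.2.2 with h | h | h
      · exact absurd (flatRow_lt_flatRow h (hne ht')) (by omega)
      · exact h
      · exact absurd (flatRow_lt_flatRow h (hne ht)) (by omega)
    exact Prod.ext hr (Prod.ext hc hl)
  · split_ifs with hc
    · refine card_eq_one.mpr ⟨(flatRow a i, c, i), ?_⟩
      ext t
      simp only [mem_filter, mem_singleton, mem_flatTableau]
      constructor
      · rintro ⟨⟨-, -, hr⟩, rfl, rfl⟩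
        rw [← hr]
      · rintro rfl
        exact ⟨⟨hi, hc, rfl⟩, rfl, rfl⟩
    · refine card_eq_zero.mpr (filter_eq_empty_iff.mpr ?_)
      rintro t ht ⟨rfl, rfl⟩
      exact hc (mem_flatTableau.mp ht).2.1
  · obtain ⟨hi, -, hr⟩ := mem_flatTableau.mp ht
    rw [hr]
    exact ⟨one_le_flatRow (mem_Icc.mp hi).1 (hne ht), flatRow_le a _, mem_Icc.mp hi⟩
  · rw [(mem_flatTableau.mp ht).2.2, (mem_flatTableau.mp ht').2.2, hl]
  · rw [(mem_flatTableau.mp ht).2.2, (mem_flatTableau.mp ht').2.2] at hr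
    exact lt_of_not_ge fun h => hr.not_ge (flatRow_mono a h)

lemma wtT_flatTableau (a : List ℕ) : wtT (flatTableau a) = compFinsupp (flatC a) :=
  calc wtT (flatTableau a)
      = ∑ t ∈ flatTableau a, Finsupp.single (flatRow a t.2.2) 1 :=
        sum_congr rfl fun t ht => by rw [(mem_flatTableau.mp ht).2.2]
    _ = ∑ i ∈ Icc 1 a.length, a.getD (i - 1) 0 • Finsupp.single (flatRow a i) 1 :=
        (isLKTF_flatTableau a).sum_label fun i => Finsupp.single (flatRow a i) 1
    _ = compFinsupp (flatC a) := by simp [compFinsupp_flatC, Finsupp.smul_single]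

lemma linearCombination_wtT (T : Finset (ℕ × ℕ × ℕ)) :
    Finsupp.linearCombination ℕ id (wtT T) = ∑ t ∈ T, t.1 := by
  simp [wtT, map_sum]

namespace IsLKTF

variable {a : List ℕ} {T : Finset (ℕ × ℕ × ℕ)} {t : ℕ × ℕ × ℕ}

lemma flatRow_label_le_row_of_column_eq_maxPart (hT : IsLKTF a T) (ht : t ∈ T)
    (hcol : t.2.1 = maxPart a) : flatRow a t.2.2 ≤ t.1 := by
  -- The cells of column `max(a)` with label at most `t.2.2` carry every nonzero label up to
  -- `t.2.2` and lie in distinct rows between `1` and `t.1`.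
  let S : Finset (ℕ × ℕ × ℕ) := {v ∈ T | v.2.1 = maxPart a ∧ v.2.2 ≤ t.2.2}
  have hsurj : Set.SurjOn (fun v : ℕ × ℕ × ℕ => v.2.2) S
      ↑({p ∈ Icc 1 t.2.2 | a.getD (p - 1) 0 ≠ 0}) := by
    intro p hp
    obtain ⟨hp, hne⟩ := mem_filter.mp hp
    have hpn : p ∈ Icc 1 a.length :=
      mem_Icc.mpr ⟨(mem_Icc.mp hp).1, (mem_Icc.mp hp).2.trans (mem_Icc.mp (hT.label_mem_Icc ht)).2⟩
    have := getD_le_maxPart a (p - 1)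
    obtain ⟨v, hv, hvc, hvl⟩ :=
      hT.exists_mem_of_column_bounds hpn (c := maxPart a) ⟨by omega, le_rfl⟩
    exact ⟨v, mem_filter.mpr ⟨hv, hvc, hvl ▸ (mem_Icc.mp hp).2⟩, hvl⟩
  have hmaps : Set.MapsTo (fun v : ℕ × ℕ × ℕ => v.1) S ↑(Icc 1 t.1) := by
    intro v hv
    obtain ⟨hv, hvc, hvl⟩ := mem_filter.mp hv
    refine mem_Icc.mpr ⟨(hT.2.2.1 v hv).1, ?_⟩
    rcases hvl.lt_or_eq with h | h
    · exact (hT.row_lt_row_of_label_lt hv ht (hvc.trans hcol.symm) h).le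
    · rw [hT.eq_of_column_eq_of_label_eq hv ht (hvc.trans hcol.symm) h]
  have hinj : Set.InjOn (fun v : ℕ × ℕ × ℕ => v.1) S := fun v hv v' hv' hr =>
    hT.1 v (mem_filter.mp hv).1 v' (mem_filter.mp hv').1 hr
      ((mem_filter.mp hv).2.1.trans (mem_filter.mp hv').2.1.symm)
  calc flatRow a t.2.2 ≤ #S := card_le_card_of_surjOn _ hsurj
    _ ≤ #(Icc 1 t.1) := card_le_card_of_injOn _ hmaps hinj
    _ = t.1 := by simp

lemma flatRow_label_le_row (hT : IsLKTF a T) (ht : t ∈ T) : flatRow a t.2.2 ≤ t.1 := by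
  have := getD_le_maxPart a (t.2.2 - 1)
  have := hT.getD_label_ne_zero ht
  obtain ⟨u, hu, hucol, hul⟩ :=
    hT.exists_mem_of_column_bounds (hT.label_mem_Icc ht) (c := maxPart a) ⟨by omega, le_rfl⟩
  have hut : u.1 ≤ t.1 := by
    rcases (hT.column_bounds ht).2.lt_or_eq with h | h
    · exact hT.2.2.2.1 t ht u hu hul.symm (hucol ▸ h)
    · rw [hT.eq_of_column_eq_of_label_eq hu ht (hucol.trans h.symm) hul]
  exact hul ▸ (hT.flatRow_label_le_row_of_column_eq_maxPart hu hucol).trans hut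

lemma row_eq_flatRow_label (hT : IsLKTF a T) (hw : wtT T = compFinsupp (flatC a)) (ht : t ∈ T) :
    t.1 = flatRow a t.2.2 := by
  have hsum : ∑ t ∈ T, flatRow a t.2.2 = ∑ t ∈ T, t.1 := by
    rw [hT.sum_label, ← linearCombination_wtT, hw, compFinsupp_flatC, map_sum]
    simp [Finsupp.linearCombination_single, mul_comm]
  exact ((sum_eq_sum_iff_of_le fun _ hs => hT.flatRow_label_le_row hs).mp hsum t ht).symm

lemma eq_flatTableau (hT : IsLKTF a T) (hrow : ∀ t ∈ T, t.1 = flatRow a t.2.2) :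
    T = flatTableau a := by
  ext t
  refine ⟨fun ht => mem_flatTableau.mpr ⟨hT.label_mem_Icc ht, hT.column_bounds ht, hrow t ht⟩,
    fun ht => ?_⟩
  obtain ⟨hi, hc, hr⟩ := mem_flatTableau.mp ht
  obtain ⟨u, hu, hucol, hul⟩ := hT.exists_mem_of_column_bounds hi hc
  have hut : u = t := Prod.ext ((hrow u hu).trans (hul ▸ hr.symm)) (Prod.ext hucol hul)
  exact hut ▸ hu

end IsLKTF

/-- There is a unique lock Kohnert tableau `T_a` of content `a` whose weight is
`flat(a)`, the nonzero parts of `a` placed in the bottom rows. -/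
theorem lkt_flat_weight_unique (a : List ℕ) :
    ∃! T : Finset (ℕ × ℕ × ℕ), IsLKTF a T ∧ wtT T = compFinsupp (flatC a) :=
  ⟨flatTableau a, ⟨isLKTF_flatTableau a, wtT_flatTableau a⟩,
    fun _ ⟨hT, hw⟩ => hT.eq_flatTableau fun _ => hT.row_eq_flatRow_label hw⟩
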